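/- arXiv:math/0307085 — 2 statements merged into one kernel-verified Lean document; each statement's English description precedes it below -/
import Mathlib

section
/- For every k ∈ I and all i, j ∈ I, the linear operators on the Fock space F(Λ_k) satisfy T_j⁺ ∘ F_i = q^{−s_j a_{ji}} · (F_i ∘ T_j⁺) and T_d ∘ F_i = q^{−δ_{0,i}} · (F_i ∘ T_d). -/
open scoped Classical

noncomputable section

/-- The base field `ℚ(q)`. -/
abbrev Kq : Type := RatFunc ℚ

/-- The indeterminate `q` of `ℚ(q)`. -/
def fq : Kq := RatFunc.X

/-- The generalized Cartan matrix of affine type `C_n^{(1)}` (meaningful for `i, j ≤ n`). -/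
def cartan (n i j : ℕ) : ℤ :=
  if i = j then 2
  else if i = 1 ∧ j = 0 then -2
  else if i = n - 1 ∧ j = n then -2
  else if i + 1 = j ∨ j + 1 = i then -1
  else 0

/-- The symmetrizing integers: `s 0 = s n = 2`, otherwise `1`. -/
def sg (n i : ℕ) : ℕ := if i = 0 ∨ i = n then 2 else 1

/-- `q_i = q ^ s_i`. -/
def qi (n i : ℕ) : Kq := fq ^ sg n i

/-- The colour of the site `(l, z)`: the unique `i ∈ {0,…,n}` with
`l + z ≡ i` or `-i (mod 2n)`. -/
def colour (n l : ℕ) (z : ℤ) : ℕ :=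
  let r := (((l : ℤ) + z) % (2 * (n : ℤ))).toNat
  if r ≤ n then r else 2 * n - r

/-- A Young diagram of charge `k`: a nondecreasing sequence of integers eventually
equal to `k`. -/
structure YD (n k : ℕ) where
  y : ℕ → ℤ
  mono : Monotone y
  eventually : ∃ N, ∀ l, N ≤ l → y l = (k : ℤ)

variable {n k : ℕ}

/-- `Y` has a concave corner at site `(l, z)`. -/
def ConcaveAt (Y : YD n k) (l : ℕ) (z : ℤ) : Prop :=
  (l = 0 ∧ z = Y.y 0) ∨ (∃ m, l = m + 1 ∧ Y.y m < Y.y (m + 1) ∧ z = Y.y (m + 1))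

/-- `Y` has a convex corner at site `(l, z)`. -/
def ConvexAt (Y : YD n k) (l : ℕ) (z : ℤ) : Prop :=
  ∃ m, l = m + 1 ∧ Y.y m < Y.y (m + 1) ∧ z = Y.y m

/-- The number of `i`-coloured concave corners of `Y`. -/
def cc (i : ℕ) (Y : YD n k) : ℕ :=
  {p : ℕ × ℤ | ConcaveAt Y p.1 p.2 ∧ colour n p.1 p.2 = i}.ncard

/-- The number of `i`-coloured convex corners of `Y`. -/
def cx (i : ℕ) (Y : YD n k) : ℕ :=
  {p : ℕ × ℤ | ConvexAt Y p.1 p.2 ∧ colour n p.1 p.2 = i}.ncard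

/-- The number of `j`-coloured boxes of `Y`. -/
def boxes (j : ℕ) (Y : YD n k) : ℕ :=
  {p : ℕ × ℤ | Y.y p.1 < p.2 ∧ p.2 ≤ (k : ℤ) ∧ colour n p.1 p.2 = j}.ncard

/-- Removing the convex corner of `Y` at site `(l, z)`. -/
def removeY (Y : YD n k) (l : ℕ) (z : ℤ) (h : ConvexAt Y l z) : YD n k where
  y := Function.update Y.y (l - 1) (Y.y (l - 1) + 1)
  mono := by
    obtain ⟨m, rfl, hlt, -⟩ := h
    simp only [Nat.add_sub_cancel]
    apply monotone_nat_of_le_succ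
    intro r
    rcases eq_or_ne r m with rfl | h1
    · rw [Function.update_self, Function.update_of_ne (by omega)]
      omega
    · rcases eq_or_ne (r + 1) m with h2 | h2
      · rw [Function.update_of_ne h1, h2, Function.update_self]
        have hm := Y.mono (Nat.le_add_right r 1)
        rw [h2] at hm
        omega
      · rw [Function.update_of_ne h1, Function.update_of_ne h2]
        exact Y.mono (Nat.le_add_right r 1)
  eventually := by
    obtain ⟨N, hN⟩ := Y.eventually
    exact ⟨N + l + 1, fun r hr => by
      rw [Function.update_of_ne (by omega)]
      exact hN r (by omega)⟩

/-- Adding a box at the concave corner of `Y` at site `(l, z)`. -/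
def addY (Y : YD n k) (l : ℕ) (z : ℤ) (h : ConcaveAt Y l z) : YD n k where
  y := Function.update Y.y l (Y.y l - 1)
  mono := by
    apply monotone_nat_of_le_succ
    intro r
    rcases eq_or_ne r l with rfl | h1
    · rw [Function.update_self, Function.update_of_ne (by omega)]
      have := Y.mono (Nat.le_add_right r 1)
      omega
    · rcases eq_or_ne (r + 1) l with h2 | h2
      · rw [Function.update_of_ne h1, h2, Function.update_self]
        rcases h with ⟨hl0, -⟩ | ⟨m, hm, hlt, -⟩
        · omega
        · have hrm : r = m := by omega
          subst hrm
          rw [← hm] at hlt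
          omega
      · rw [Function.update_of_ne h1, Function.update_of_ne h2]
        exact Y.mono (Nat.le_add_right r 1)
  eventually := by
    obtain ⟨N, hN⟩ := Y.eventually
    exact ⟨N + l + 1, fun r hr => by
      rw [Function.update_of_ne (by omega)]
      exact hN r (by omega)⟩

/-- The Fock space `F(Λ_k)`: the `ℚ(q)`-vector space with basis the Young diagrams of
charge `k`. -/
abbrev Fock (n k : ℕ) := YD n k →₀ Kq

/-- The basis vector of the Fock space corresponding to a Young diagram. -/
def fockB (Y : YD n k) : Fock n k := Finsupp.single Y 1

/-- The linear operator on the Fock space determined by its values on basis vectors. -/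
def lift (g : YD n k → Fock n k) : Fock n k →ₗ[Kq] Fock n k :=
  Finsupp.lsum Kq fun Y => LinearMap.toSpanSingleton Kq (Fock n k) (g Y)

/-- The single-site operator `E_{(l,z)}`. -/
def Esite (n k : ℕ) (l : ℕ) (z : ℤ) : Fock n k →ₗ[Kq] Fock n k :=
  lift fun Y => if h : ConvexAt Y l z then fockB (removeY Y l z h) else 0

/-- The single-site operator `F_{(l,z)}`. -/
def Fsite (n k : ℕ) (l : ℕ) (z : ℤ) : Fock n k →ₗ[Kq] Fock n k :=
  lift fun Y => if h : ConcaveAt Y l z then fockB (addY Y l z h) else 0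

/-- `a(i,l,z,Y)`: the number of `i`-coloured concave corners at sites greater than `(l,z)`
minus the number of `i`-coloured convex corners at sites greater than `(l,z)`. -/
def aExp (i l : ℕ) (z : ℤ) (Y : YD n k) : ℤ :=
  ({p : ℕ × ℤ | ConcaveAt Y p.1 p.2 ∧ colour n p.1 p.2 = i ∧
      (l : ℤ) + z < (p.1 : ℤ) + p.2}.ncard : ℤ)
  - ({p : ℕ × ℤ | ConvexAt Y p.1 p.2 ∧ colour n p.1 p.2 = i ∧
      (l : ℤ) + z < (p.1 : ℤ) + p.2}.ncard : ℤ)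

/-- `b(i,l,z,Y)`: the number of `i`-coloured convex corners at sites smaller than `(l,z)`
minus the number of `i`-coloured concave corners at sites smaller than `(l,z)`. -/
def bExp (i l : ℕ) (z : ℤ) (Y : YD n k) : ℤ :=
  ({p : ℕ × ℤ | ConvexAt Y p.1 p.2 ∧ colour n p.1 p.2 = i ∧
      (p.1 : ℤ) + p.2 < (l : ℤ) + z}.ncard : ℤ)
  - ({p : ℕ × ℤ | ConcaveAt Y p.1 p.2 ∧ colour n p.1 p.2 = i ∧
      (p.1 : ℤ) + p.2 < (l : ℤ) + z}.ncard : ℤ)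

/-- The Chevalley-type operator `E_i` on the Fock space: on a basis diagram `Y`,
`E_i Y = Σ_{(l,z) : i-coloured convex corner of Y} q_i^{a(i,l,z,Y)} • (Y with corner removed)`,
where the power of `q_i` records the product of the `T⁺` factors at larger `i`-coloured sites. -/
def Ei (n k i : ℕ) : Fock n k →ₗ[Kq] Fock n k :=
  lift fun Y => ∑ᶠ p : ℕ × ℤ,
    if h : ConvexAt Y p.1 p.2 ∧ colour n p.1 p.2 = i then
      (qi n i ^ aExp i p.1 p.2 Y) • fockB (removeY Y p.1 p.2 h.1)
    else 0

/-- The Chevalley-type operator `F_i` on the Fock space: on a basis diagram `Y`,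
`F_i Y = Σ_{(l,z) : i-coloured concave corner of Y} q_i^{b(i,l,z,Y)} • (Y with box added)`,
where the power of `q_i` records the product of the `T⁻` factors at smaller `i`-coloured sites. -/
def Fi (n k i : ℕ) : Fock n k →ₗ[Kq] Fock n k :=
  lift fun Y => ∑ᶠ p : ℕ × ℤ,
    if h : ConcaveAt Y p.1 p.2 ∧ colour n p.1 p.2 = i then
      (qi n i ^ bExp i p.1 p.2 Y) • fockB (addY Y p.1 p.2 h.1)
    else 0

/-- The operator `T_i⁺ = ∏_{(l,z) of colour i} T⁺_{(l,z)}`: it multiplies a basis diagram `Y`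
by `q_i^{cc_i(Y) - cx_i(Y)}`. -/
def Tplus (n k i : ℕ) : Fock n k →ₗ[Kq] Fock n k :=
  lift fun Y => (qi n i ^ ((cc i Y : ℤ) - (cx i Y : ℤ))) • fockB Y

/-- The operator `T_i⁻ = ∏_{(l,z) of colour i} T⁻_{(l,z)}`: it multiplies a basis diagram `Y`
by `q_i^{-(cc_i(Y) - cx_i(Y))}`. -/
def Tminus (n k i : ℕ) : Fock n k →ₗ[Kq] Fock n k :=
  lift fun Y => (qi n i ^ (-((cc i Y : ℤ) - (cx i Y : ℤ)))) • fockB Y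

/-- The operator `T_d`: it multiplies a basis diagram `Y` by `q^{-b_0(Y)}`. -/
def Td (n k : ℕ) : Fock n k →ₗ[Kq] Fock n k :=
  lift fun Y => (fq ^ (-(boxes 0 Y : ℤ))) • fockB Y

/-- The quantum integer `[m]_x = (x^m - x^{-m})/(x - x^{-1})`. -/
def qInt (x : Kq) (m : ℕ) : Kq := (x ^ m - x⁻¹ ^ m) / (x - x⁻¹)

/-- The quantum factorial `[m]_x!`. -/
def qFact (x : Kq) : ℕ → Kq
  | 0 => 1
  | m + 1 => qInt x (m + 1) * qFact x m

/-- The quantum binomial coefficient `[m choose r]_x`. -/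
def qBinom (x : Kq) (m r : ℕ) : Kq := qFact x m / (qFact x r * qFact x (m - r))

/-- The empty Young diagram `φ_k` of charge `k`. -/
def phiYD (n k : ℕ) : YD n k :=
  ⟨fun _ => (k : ℤ), monotone_const, ⟨0, fun _ _ => rfl⟩⟩

/-- `Y` has an (either concave or convex) corner at site `(l, z)`. -/
def CornerAt (Y : YD n k) (l : ℕ) (z : ℤ) : Prop := ConcaveAt Y l z ∨ ConvexAt Y l z

/-- `L` lists the sites of the `i`-coloured corners of `Y` in strictly decreasing order. -/
def Enumerates (Y : YD n k) (i : ℕ) (L : List (ℕ × ℤ)) : Prop :=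
  (∀ p : ℕ × ℤ, p ∈ L ↔ (CornerAt Y p.1 p.2 ∧ colour n p.1 p.2 = i)) ∧
  L.Chain' (fun p q => (q.1 : ℤ) + q.2 < (p.1 : ℤ) + p.2)

/-- The `i`-signature of `Y` along the list `L` of its `i`-coloured corner sites:
each site is tagged `true` if the corner there is convex (`σ = 1`) and `false`
if it is concave (`σ = 0`). -/
def sigL (Y : YD n k) (L : List (ℕ × ℤ)) : List ((ℕ × ℤ) × Bool) :=
  L.map fun p => (p, if ConvexAt Y p.1 p.2 then true else false)

/-- Reduction of a signature: repeatedly delete adjacent pairs `(0, 1)` (a concave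
entry immediately followed by a convex entry); the surviving entries are those
indexed by `J(σ)`. -/
def reduceSig : List ((ℕ × ℤ) × Bool) → List ((ℕ × ℤ) × Bool) :=
  List.foldr (fun x acc =>
    if x.2 = false ∧ acc.head?.map Prod.snd = some true then acc.tail else x :: acc) []

/-- The site at which `f̃_i` adds a box: the corner of the smallest index `r ∈ J(σ)`
with `σ_r = 0` (`none` if there is no such index, i.e. `f̃_i Y = 0`). -/
def ftildeSite (Y : YD n k) (i : ℕ) (L : List (ℕ × ℤ)) : Option (ℕ × ℤ) :=
  ((reduceSig (sigL Y L)).find? (fun x => !x.2)).map Prod.fst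

/-- The site at which `ẽ_i` removes a box: the corner of the largest index `r ∈ J(σ)`
with `σ_r = 1` (`none` if there is no such index, i.e. `ẽ_i Y = 0`). -/
def etildeSite (Y : YD n k) (i : ℕ) (L : List (ℕ × ℤ)) : Option (ℕ × ℤ) :=
  (((reduceSig (sigL Y L)).filter (fun x => x.2)).getLast?).map Prod.fst


/-!
`T_j⁺` and `T_d` are diagonal in the basis of Young diagrams, and every term of `F_i Y` is `Y`
with one `i`-coloured box added. So it suffices that adding such a box multiplies the eigenvalue
by a constant. For `T_d` the box is `0`-coloured iff `i = 0`. For `T_j⁺`, adding a box at site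
`(l, z)` changes the corners only in columns `l` and `l + 1`, and `cc_j - cx_j` changes by
`[colour (l, z - 1) = j] + [colour (l + 1, z) = j] - 2 [i = j]`; the two sites `(l, z - 1)` and
`(l + 1, z)` carry the colours of the neighbours of `i` in the Dynkin diagram of `C_n^{(1)}`,
so this is `-a_{ji}`.
-/

theorem Int.sub_one_emod_of_pos {t M : ℤ} (hM : 0 < M) :
    (t - 1) % M = if t % M = 0 then M - 1 else t % M - 1 := by
  have h0 := Int.emod_nonneg t hM.ne'
  have h1 := Int.emod_lt_of_pos t hM
  rw [← Int.emod_sub_emod]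
  split_ifs with h
  · rw [h, ← Int.add_mul_emod_self_left (0 - 1) M 1, Int.emod_eq_of_lt (by omega) (by omega)]
    ring
  · exact Int.emod_eq_of_lt (by omega) (by omega)

theorem Int.add_one_emod_of_pos {t M : ℤ} (hM : 0 < M) :
    (t + 1) % M = if t % M = M - 1 then 0 else t % M + 1 := by
  have h0 := Int.emod_nonneg t hM.ne'
  have h1 := Int.emod_lt_of_pos t hM
  rw [← Int.emod_add_emod]
  split_ifs with h
  · rw [h, sub_add_cancel, Int.emod_self]
  · exact Int.emod_eq_of_lt (by omega) (by omega)

theorem natCast_colour (hn : 0 < n) (l : ℕ) (z : ℤ) :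
    (colour n l z : ℤ) = if (l + z) % (2 * n) ≤ n then (l + z) % (2 * n)
      else 2 * n - (l + z) % (2 * n) := by
  have h0 := Int.emod_nonneg ((l : ℤ) + z) (by omega : (2 * n : ℤ) ≠ 0)
  have h1 := Int.emod_lt_of_pos ((l : ℤ) + z) (by omega : (0 : ℤ) < 2 * n)
  unfold colour
  dsimp only
  split_ifs <;> omega

theorem colour_congr {l l' : ℕ} {z z' : ℤ} (h : (l : ℤ) + z = l' + z') :
    colour n l z = colour n l' z' := by
  unfold colour
  rw [h]

/-- `a` and `b` are the two neighbours of `c` in the Dynkin diagram of `C_n^{(1)}`, where the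
double edges `0 ⇒ 1` and `n - 1 ⇐ n` count twice. -/
def DynkinNeighbours (n c a b : ℕ) : Prop :=
  (c = 0 ∧ a = 1 ∧ b = 1) ∨ (c = n ∧ a = n - 1 ∧ b = n - 1) ∨
    (0 < c ∧ c < n ∧ (a + 1 = c ∧ b = c + 1 ∨ a = c + 1 ∧ b + 1 = c))

theorem dynkinNeighbours_colour (hn : 0 < n) (l : ℕ) (z : ℤ) :
    DynkinNeighbours n (colour n l z) (colour n l (z - 1)) (colour n (l + 1) z) := by
  have hM : (0 : ℤ) < 2 * n := by omega
  have h0 := natCast_colour hn l z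
  have h1 := natCast_colour hn l (z - 1)
  have h2 := natCast_colour hn (l + 1) z
  have r0 := Int.emod_nonneg ((l : ℤ) + z) hM.ne'
  have r1 := Int.emod_lt_of_pos ((l : ℤ) + z) hM
  rw [← add_sub_assoc, Int.sub_one_emod_of_pos hM] at h1
  rw [Nat.cast_succ, add_right_comm, Int.add_one_emod_of_pos hM] at h2
  generalize ((l : ℤ) + z) % (2 * n) = r at *
  unfold DynkinNeighbours
  split_ifs at h0 h1 h2 <;> omega

theorem DynkinNeighbours.neg_cartan (hn : 0 < n) {j c a b : ℕ} (hj : j ≤ n)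
    (h : DynkinNeighbours n c a b) :
    (if a = j then (1 : ℤ) else 0) + (if b = j then 1 else 0) - 2 * (if c = j then 1 else 0)
      = - cartan n j c := by
  unfold cartan
  rcases h with ⟨hc, ha, hb⟩ | ⟨hc, ha, hb⟩ | ⟨hc0, hcn, ⟨ha, hb⟩ | ⟨ha, hb⟩⟩ <;>
    split_ifs <;> omega

theorem YD.y_le (Y : YD n k) (m : ℕ) : Y.y m ≤ k := by
  obtain ⟨N, hN⟩ := Y.eventually
  calc Y.y m ≤ Y.y (max m N) := Y.mono (le_max_left _ _)
    _ = k := hN _ (le_max_right _ _)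

theorem YD.y_sub_one_eq_of_lt (Y : YD n k) {N a : ℕ} (hN : ∀ m, N ≤ m → Y.y m = k)
    (ha : N < a) : Y.y (a - 1) = Y.y a := by
  rw [hN a ha.le, hN (a - 1) (by omega)]

theorem concaveAt_iff (Y : YD n k) (l : ℕ) (z : ℤ) :
    ConcaveAt Y l z ↔ z = Y.y l ∧ (l = 0 ∨ Y.y (l - 1) < Y.y l) := by
  constructor
  · rintro (⟨rfl, rfl⟩ | ⟨m, rfl, hm, rfl⟩)
    · exact ⟨rfl, Or.inl rfl⟩
    · exact ⟨rfl, Or.inr (by simpa using hm)⟩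
  · rintro ⟨rfl, rfl | hlt⟩
    · exact Or.inl ⟨rfl, rfl⟩
    · obtain ⟨m, rfl⟩ : ∃ m, l = m + 1 :=
        Nat.exists_eq_add_one.2 (Nat.pos_of_ne_zero (by rintro rfl; simp at hlt))
      exact Or.inr ⟨m, rfl, by simpa using hlt, rfl⟩

theorem convexAt_iff (Y : YD n k) (l : ℕ) (z : ℤ) :
    ConvexAt Y l z ↔ l ≠ 0 ∧ Y.y (l - 1) < Y.y l ∧ z = Y.y (l - 1) := by
  constructor
  · rintro ⟨m, rfl, hm, rfl⟩
    simpa using hm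
  · rintro ⟨hl, hlt, rfl⟩
    obtain ⟨m, rfl⟩ := Nat.exists_eq_add_one.2 (Nat.pos_of_ne_zero hl)
    exact ⟨m, rfl, by simpa using hlt, by simp⟩

theorem addY_y (Y : YD n k) (l : ℕ) (z : ℤ) (h : ConcaveAt Y l z) :
    (addY Y l z h).y = Function.update Y.y l (Y.y l - 1) := rfl

theorem setOf_concaveAt_eq_image (Y : YD n k) (j : ℕ) {N : ℕ}
    (hN : ∀ m, N ≤ m → Y.y m = k) :
    {p : ℕ × ℤ | ConcaveAt Y p.1 p.2 ∧ colour n p.1 p.2 = j} = (fun a => (a, Y.y a)) ''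
      ↑({a ∈ Finset.range (N + 1) | (a = 0 ∨ Y.y (a - 1) < Y.y a) ∧ colour n a (Y.y a) = j} :
        Finset ℕ) := by
  ext ⟨a, b⟩
  simp only [Set.mem_ofPred_eq, concaveAt_iff, Finset.coe_filter, Finset.mem_range,
    Set.mem_image, Prod.mk.injEq]
  constructor
  · rintro ⟨⟨rfl, hcorner⟩, hcol⟩
    refine ⟨a, ⟨?_, hcorner, hcol⟩, rfl, rfl⟩
    by_contra! hNa
    rcases hcorner with rfl | hlt
    · omega
    · have := Y.y_sub_one_eq_of_lt hN (by omega : N < a)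
      omega
  · rintro ⟨a, ⟨-, hcorner, hcol⟩, rfl, rfl⟩
    exact ⟨⟨rfl, hcorner⟩, hcol⟩

theorem setOf_convexAt_eq_image (Y : YD n k) (j : ℕ) {N : ℕ}
    (hN : ∀ m, N ≤ m → Y.y m = k) :
    {p : ℕ × ℤ | ConvexAt Y p.1 p.2 ∧ colour n p.1 p.2 = j} = (fun a => (a, Y.y (a - 1))) ''
      ↑({a ∈ Finset.range (N + 1) | a ≠ 0 ∧ Y.y (a - 1) < Y.y a ∧ colour n a (Y.y (a - 1)) = j} :
        Finset ℕ) := by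
  ext ⟨a, b⟩
  simp only [Set.mem_ofPred_eq, convexAt_iff, Finset.coe_filter, Finset.mem_range,
    Set.mem_image, Prod.mk.injEq]
  constructor
  · rintro ⟨⟨ha, hlt, rfl⟩, hcol⟩
    refine ⟨a, ⟨?_, ha, hlt, hcol⟩, rfl, rfl⟩
    by_contra! hNa
    have := Y.y_sub_one_eq_of_lt hN (by omega : N < a)
    omega
  · rintro ⟨a, ⟨-, ha, hlt, hcol⟩, rfl, rfl⟩
    exact ⟨⟨ha, hlt, rfl⟩, hcol⟩

theorem ncard_image_graph (f : ℕ → ℤ) (s : Finset ℕ) :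
    ((fun a => (a, f a)) '' (s : Set ℕ)).ncard = s.card := by
  rw [Set.ncard_image_of_injective _ fun a b hab => congrArg Prod.fst hab, Set.ncard_coe_finset]

theorem cc_sub_cx_eq_sum (Y : YD n k) (j : ℕ) {N : ℕ} (hN : ∀ m, N ≤ m → Y.y m = k) :
    (cc j Y : ℤ) - cx j Y = ∑ a ∈ Finset.range (N + 1), (if colour n a (Y.y a) = j then 1 else 0)
      - ∑ a ∈ Finset.range N, (if colour n (a + 1) (Y.y a) = j then 1 else 0) := by
  -- without a step at column `a + 1` both indicators test the same site
  have hstep : ∀ a, ((if Y.y a < Y.y (a + 1) ∧ colour n (a + 1) (Y.y (a + 1)) = j then 1 else 0)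
      - if Y.y a < Y.y (a + 1) ∧ colour n (a + 1) (Y.y a) = j then 1 else 0 : ℤ)
      = (if colour n (a + 1) (Y.y (a + 1)) = j then 1 else 0)
        - if colour n (a + 1) (Y.y a) = j then 1 else 0 := by
    intro a
    rcases (Y.mono a.le_succ).lt_or_eq with hlt | heq
    · simp only [hlt, true_and]
    · simp only [heq, lt_irrefl, false_and, if_false, sub_self]
  have hsum := Finset.sum_congr rfl fun a (_ : a ∈ Finset.range N) => hstep a
  rw [Finset.sum_sub_distrib, Finset.sum_sub_distrib] at hsum
  rw [cc, cx, setOf_concaveAt_eq_image Y j hN, setOf_convexAt_eq_image Y j hN,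
    ncard_image_graph, ncard_image_graph (fun a => Y.y (a - 1)), Finset.card_filter,
    Finset.card_filter, Finset.sum_range_succ' _ N, Finset.sum_range_succ' _ N,
    Finset.sum_range_succ' _ N]
  push_cast
  simp only [false_or, true_or, true_and, ne_eq, Nat.add_one_ne_zero, not_false_eq_true,
    not_true_eq_false, false_and, if_false]
  linarith

theorem cc_sub_cx_addY (hn : 0 < n) {j : ℕ} (hj : j ≤ n) (Y : YD n k) (l : ℕ) (z : ℤ)
    (h : ConcaveAt Y l z) :
    (cc j (addY Y l z h) : ℤ) - cx j (addY Y l z h)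
      = cc j Y - cx j Y - cartan n j (colour n l z) := by
  obtain ⟨rfl, -⟩ := (concaveAt_iff Y l z).1 h
  obtain ⟨N₀, hN₀⟩ := Y.eventually
  have hN : ∀ m, N₀ + l + 1 ≤ m → Y.y m = k := fun m hm => hN₀ m (by omega)
  have hN' : ∀ m, N₀ + l + 1 ≤ m → (addY Y l _ h).y m = k := fun m hm => by
    rw [addY_y, Function.update_of_ne (by omega)]
    exact hN m hm
  rw [cc_sub_cx_eq_sum _ j hN', cc_sub_cx_eq_sum Y j hN]
  have hconcave : ∑ a ∈ Finset.range (N₀ + l + 1 + 1),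
        ((if colour n a ((addY Y l _ h).y a) = j then 1 else 0)
          - if colour n a (Y.y a) = j then 1 else 0 : ℤ)
      = (if colour n l (Y.y l - 1) = j then 1 else 0)
        - if colour n l (Y.y l) = j then 1 else 0 := by
    rw [Finset.sum_eq_single_of_mem l (Finset.mem_range.2 (by omega))]
    · simp only [addY_y, Function.update_self]
    · intro a _ ha
      simp only [addY_y, Function.update_of_ne ha, sub_self]
  have hconvex : ∑ a ∈ Finset.range (N₀ + l + 1),
        ((if colour n (a + 1) ((addY Y l _ h).y a) = j then 1 else 0)
          - if colour n (a + 1) (Y.y a) = j then 1 else 0 : ℤ)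
      = (if colour n l (Y.y l) = j then 1 else 0)
        - if colour n (l + 1) (Y.y l) = j then 1 else 0 := by
    rw [Finset.sum_eq_single_of_mem l (Finset.mem_range.2 (by omega))]
    · simp only [addY_y, Function.update_self,
        colour_congr (show ((l + 1 : ℕ) : ℤ) + (Y.y l - 1) = l + Y.y l by push_cast; ring)]
    · intro a _ ha
      simp only [addY_y, Function.update_of_ne ha, sub_self]
  rw [Finset.sum_sub_distrib] at hconcave hconvex
  have hcartan := (dynkinNeighbours_colour hn l (Y.y l)).neg_cartan hn hj
  linarith

theorem finite_setOf_box (Y : YD n k) (j : ℕ) :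
    {p : ℕ × ℤ | Y.y p.1 < p.2 ∧ p.2 ≤ k ∧ colour n p.1 p.2 = j}.Finite := by
  obtain ⟨N, hN⟩ := Y.eventually
  refine (Finset.range N ×ˢ Finset.Icc (Y.y 0 + 1) (k : ℤ)).finite_toSet.subset ?_
  rintro ⟨a, b⟩ ⟨hlt, hle, -⟩
  dsimp only at hlt hle
  have h0 : Y.y 0 ≤ Y.y a := Y.mono (Nat.zero_le a)
  have haN : a < N := by
    by_contra! haN
    rw [hN a haN] at hlt
    omega
  simp only [Finset.coe_product, Set.mem_prod, Finset.mem_coe, Finset.mem_range, Finset.mem_Icc]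
  omega

theorem boxes_addY (Y : YD n k) (l : ℕ) (z : ℤ) (h : ConcaveAt Y l z) (j : ℕ) :
    boxes j (addY Y l z h) = boxes j Y + if colour n l z = j then 1 else 0 := by
  obtain ⟨rfl, -⟩ := (concaveAt_iff Y l z).1 h
  have hbox : ∀ a b, (addY Y l _ h).y a < b ↔ (a, b) = (l, Y.y l) ∨ Y.y a < b := by
    intro a b
    rcases eq_or_ne a l with rfl | ha
    · simp only [addY_y, Function.update_self, Prod.mk.injEq, true_and]
      omega
    · simp [addY_y, ha]
  unfold boxes
  split_ifs with hc
  · rw [← Set.ncard_insert_of_notMem (a := (l, Y.y l)) (fun hmem => lt_irrefl _ hmem.1)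
      (finite_setOf_box Y j)]
    congr 1
    ext ⟨a, b⟩
    simp only [Set.mem_insert_iff, Set.mem_ofPred_eq, hbox]
    constructor
    · rintro ⟨hp | hlt, hle, hcol⟩
      exacts [Or.inl hp, Or.inr ⟨hlt, hle, hcol⟩]
    · rintro (hp | hbox)
      · simp only [Prod.mk.injEq] at hp
        obtain ⟨rfl, rfl⟩ := hp
        exact ⟨Or.inl rfl, Y.y_le a, hc⟩
      · exact ⟨Or.inr hbox.1, hbox.2⟩
  · congr 1
    ext ⟨a, b⟩
    simp only [Set.mem_ofPred_eq, hbox, Prod.mk.injEq]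
    constructor
    · rintro ⟨⟨rfl, rfl⟩ | hlt, hle, hcol⟩
      exacts [absurd hcol hc, ⟨hlt, hle, hcol⟩]
    · rintro ⟨hlt, hle, hcol⟩
      exact ⟨Or.inr hlt, hle, hcol⟩

theorem finite_setOf_concaveAt (Y : YD n k) (j : ℕ) :
    {p : ℕ × ℤ | ConcaveAt Y p.1 p.2 ∧ colour n p.1 p.2 = j}.Finite := by
  obtain ⟨N, hN⟩ := Y.eventually
  rw [setOf_concaveAt_eq_image Y j hN]
  exact (Finset.finite_toSet _).image _

theorem lift_fockB (g : YD n k → Fock n k) (Y : YD n k) : lift g (fockB Y) = g Y := by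
  simp [lift, fockB]

theorem linearMap_ext_fockB {f g : Fock n k →ₗ[Kq] Fock n k}
    (h : ∀ Y, f (fockB Y) = g (fockB Y)) : f = g :=
  Finsupp.lhom_ext' fun Y => LinearMap.ext_ring (h Y)

theorem lift_smul_fockB_comp_Fi {i : ℕ} (w : YD n k → Kq) (x : Kq)
    (hw : ∀ Y l z (h : ConcaveAt Y l z), colour n l z = i → w (addY Y l z h) = x * w Y) :
    lift (fun Y => w Y • fockB Y) ∘ₗ Fi n k i
      = x • (Fi n k i ∘ₗ lift fun Y => w Y • fockB Y) := by
  refine linearMap_ext_fockB fun Y => ?_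
  have hfin : Function.HasFiniteSupport fun p : ℕ × ℤ =>
      if h : ConcaveAt Y p.1 p.2 ∧ colour n p.1 p.2 = i then
        (qi n i ^ bExp i p.1 p.2 Y) • fockB (addY Y p.1 p.2 h.1) else 0 :=
    (finite_setOf_concaveAt Y i).subset fun p hp => by_contra fun hp' => hp (dif_neg hp')
  rw [LinearMap.comp_apply, LinearMap.smul_apply, LinearMap.comp_apply, Fi, lift_fockB,
    lift_fockB, map_smul, lift_fockB, map_finsum _ hfin, smul_finsum, smul_finsum]
  refine finsum_congr fun p => ?_
  split_ifs with hp
  · rw [map_smul, lift_fockB, smul_smul, smul_smul, smul_smul, hw _ _ _ _ hp.2]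
    congr 1
    ring
  · simp

theorem fq_ne_zero : fq ≠ 0 := RatFunc.X_ne_zero

theorem Tplus_comp_Fi (hn : 0 < n) {i j : ℕ} (hj : j ≤ n) :
    Tplus n k j ∘ₗ Fi n k i
      = (fq ^ (-((sg n j : ℤ) * cartan n j i))) • (Fi n k i ∘ₗ Tplus n k j) := by
  refine lift_smul_fockB_comp_Fi (fun Y => qi n j ^ ((cc j Y : ℤ) - cx j Y)) _
    fun Y l z h hc => ?_
  rw [cc_sub_cx_addY hn hj, hc, qi, ← zpow_natCast, ← zpow_mul, ← zpow_mul,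
    ← zpow_add₀ fq_ne_zero]
  congr 1
  ring

theorem Td_comp_Fi {i : ℕ} :
    Td n k ∘ₗ Fi n k i = (fq ^ (-(if i = 0 then (1 : ℤ) else 0))) • (Fi n k i ∘ₗ Td n k) := by
  refine lift_smul_fockB_comp_Fi (fun Y => fq ^ (-(boxes 0 Y : ℤ))) _ fun Y l z h hc => ?_
  rw [boxes_addY, hc, ← zpow_add₀ fq_ne_zero]
  push_cast
  congr 1
  ring

theorem fock_Tplus_Td_Fi_comm_general (n : ℕ) (hn : 2 ≤ n) (k i j : ℕ)
    (hj : j ≤ n) :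
    Tplus n k j ∘ₗ Fi n k i = (fq ^ (-((sg n j : ℤ) * cartan n j i))) • (Fi n k i ∘ₗ Tplus n k j) ∧
    Td n k ∘ₗ Fi n k i = (fq ^ (-(if i = 0 then (1 : ℤ) else 0))) • (Fi n k i ∘ₗ Td n k) :=
  ⟨Tplus_comp_Fi (by omega) hj, Td_comp_Fi⟩

/-- For every `k ∈ I` and all `i, j ∈ I`, on the Fock space `F(Λ_k)` we have
`T_j⁺ ∘ F_i = q^{-s_j a_{ji}} • (F_i ∘ T_j⁺)` and `T_d ∘ F_i = q^{-δ_{0i}} • (F_i ∘ T_d)`. -/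
theorem fock_Tplus_Td_Fi_comm (n : ℕ) (hn : 2 ≤ n) (k i j : ℕ)
    (hk : k ≤ n) (hi : i ≤ n) (hj : j ≤ n) :
    Tplus n k j ∘ₗ Fi n k i = (fq ^ (-((sg n j : ℤ) * cartan n j i))) • (Fi n k i ∘ₗ Tplus n k j) ∧
    Td n k ∘ₗ Fi n k i = (fq ^ (-(if i = 0 then (1 : ℤ) else 0))) • (Fi n k i ∘ₗ Td n k) :=
  fock_Tplus_Td_Fi_comm_general n hn k i j hj
end
end

section
/- For every k ∈ I, every Young diagram Y of charge k, and every i ∈ I, the numbers of i-coloured concave and convex corners of Y satisfy cc_i(Y) − cx_i(Y) = δ_{ik} − Σ_{j∈I} a_{ij} · b_j(Y). (Equivalently, every Young diagram of charge k is a weight vector of the Fock space of weight Λ_k − Σ_j b_j(Y) α_j.) -/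
/-!
The colour of a site `(l, z)` depends only on its content `l + z`; let `χᵢ(s)` indicate that
content `s` has colour `i`. In type `C_n^{(1)}` both neighbours `s ± 1` of a content of colour `0`
(resp. `n`) have colour `1` (resp. `n - 1`), which is what the entries `-2` of the Cartan matrix
record: `∑ⱼ a_{ij} χⱼ(s) = 2 χᵢ(s) - χᵢ(s - 1) - χᵢ(s + 1)`. Summed over the boxes of a column, this
second difference telescopes to the top and bottom of the column; the signed count of corners
telescopes along the boundary of the diagram to the same expression.
-/

open scoped Classical

noncomputable section

variable {n k : ℕ}

def colourIndicator (n i : ℕ) (s : ℤ) : ℤ := if colour n 0 s = i then 1 else 0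

lemma colour_eq_colour_zero (n l : ℕ) (z : ℤ) : colour n l z = colour n 0 (l + z) := by
  simp [colour]

lemma colour_le (n l : ℕ) (z : ℤ) : colour n l z ≤ n := by
  dsimp only [colour]
  split <;> omega

lemma colour_zero_add_mul (n : ℕ) (t q : ℤ) : colour n 0 (t + 2 * n * q) = colour n 0 t := by
  simp [colour, Int.add_mul_emod_self_left]

lemma colour_zero_cases {t : ℤ} (ht : -(n : ℤ) ≤ t) (ht' : t ≤ 2 * n) :
    (t < 0 ∧ (colour n 0 t : ℤ) = -t) ∨ (0 ≤ t ∧ t ≤ n ∧ (colour n 0 t : ℤ) = t) ∨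
      (n < t ∧ (colour n 0 t : ℤ) = 2 * n - t) := by
  have hmod : t % (2 * n) = if t < 0 then t + 2 * n else if t < 2 * n then t else 0 := by
    split_ifs with h₁ h₂
    · rw [← Int.add_emod_right]; exact Int.emod_eq_of_lt (by omega) (by omega)
    · exact Int.emod_eq_of_lt (by omega) h₂
    · rw [show t = 2 * n by omega, Int.emod_self]
  simp only [colour, Nat.cast_zero, zero_add, hmod]
  split_ifs <;> omega

lemma colour_zero_natCast (hk : k ≤ n) : colour n 0 k = k := by
  have := colour_zero_cases (n := n) (t := k) (by omega) (by omega)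
  omega

theorem cartan_colour_zero (hn : 0 < n) {i : ℕ} (hi : i ≤ n) (s : ℤ) :
    cartan n i (colour n 0 s) =
      2 * colourIndicator n i s - colourIndicator n i (s - 1) - colourIndicator n i (s + 1) := by
  obtain ⟨r, q, rfl, hr₀, hr⟩ : ∃ r q : ℤ, s = r + 2 * n * q ∧ 0 ≤ r ∧ r < 2 * n :=
    ⟨s % (2 * n), s / (2 * n), (Int.emod_add_mul_ediv s _).symm, Int.emod_nonneg _ (by omega),
      Int.emod_lt_of_pos _ (by omega)⟩
  rw [show r + 2 * n * q - 1 = r - 1 + 2 * n * q by ring,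
    show r + 2 * n * q + 1 = r + 1 + 2 * n * q by ring]
  simp only [colourIndicator, colour_zero_add_mul]
  have h₀ := colour_zero_cases (n := n) (t := r) (by omega) (by omega)
  have h₁ := colour_zero_cases (n := n) (t := r - 1) (by omega) (by omega)
  have h₂ := colour_zero_cases (n := n) (t := r + 1) (by omega) (by omega)
  unfold cartan
  split_ifs <;> omega

theorem Finset.sum_Ioc_two_nsmul_sub_sub {G : Type*} [AddCommGroup G] (f : ℤ → G) {a b : ℤ}
    (h : a ≤ b) :
    ∑ s ∈ Finset.Ioc a b, (2 • f s - f (s - 1) - f (s + 1)) =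
      (f b - f (b + 1)) - (f a - f (a + 1)) := by
  induction b, h using Int.leInduction with
  | base => simp
  | succ b hab ih =>
    rw [← Finset.insert_Ioc_right_eq_Ioc_add_one hab, Finset.sum_insert (by simp), ih,
      add_sub_cancel_right, two_nsmul]
    abel

theorem sum_cartan_mul_colourIndicator (hn : 0 < n) {i : ℕ} (hi : i ≤ n) (s : ℤ) :
    ∑ j ∈ Finset.range (n + 1), cartan n i j * colourIndicator n j s =
      2 * colourIndicator n i s - colourIndicator n i (s - 1) - colourIndicator n i (s + 1) := by
  rw [Finset.sum_eq_single (colour n 0 s), ← cartan_colour_zero hn hi]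
  · simp [colourIndicator]
  · intro j _ hj
    simp [colourIndicator, Ne.symm hj]
  · simp [colour_le]

theorem Set.ncard_setOf_eq_sum_range {p : ℕ → Prop} {N : ℕ} (h : ∀ m, p m → m < N) :
    ({m | p m}.ncard : ℤ) = ∑ m ∈ Finset.range N, if p m then 1 else 0 := by
  rw [show {m | p m} = ↑((Finset.range N).filter p) by ext m; simpa using h m,
    Set.ncard_coe_finset, Finset.card_filter, Nat.cast_sum]
  push_cast
  rfl

namespace YD

variable (Y : YD n k) {N : ℕ}

theorem y_le_charge (m : ℕ) : Y.y m ≤ k := by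
  obtain ⟨N, hN⟩ := Y.eventually
  exact hN (max m N) (le_max_right m N) ▸ Y.mono (le_max_left m N)

variable {Y}

theorem lt_of_y_lt_y_add_one (hN : ∀ l, N ≤ l → Y.y l = k) {m : ℕ} (h : Y.y m < Y.y (m + 1)) :
    m < N := by
  by_contra! hm
  have := hN m hm
  have := hN (m + 1) (by omega)
  omega

theorem cx_eq_sum (hN : ∀ l, N ≤ l → Y.y l = k) (i : ℕ) :
    (cx i Y : ℤ) = ∑ m ∈ Finset.range N,
      if Y.y m < Y.y (m + 1) then colourIndicator n i (m + Y.y m + 1) else 0 := by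
  have hset : {p : ℕ × ℤ | ConvexAt Y p.1 p.2 ∧ colour n p.1 p.2 = i} =
      (fun m => (m + 1, Y.y m)) '' {m | Y.y m < Y.y (m + 1) ∧ colour n (m + 1) (Y.y m) = i} := by
    ext ⟨l, z⟩
    simp only [ConvexAt, Set.mem_ofPred_eq, Set.mem_image, Prod.mk.injEq]
    grind
  rw [cx, hset, Set.ncard_image_of_injective _ (fun a b h => by simpa using congrArg Prod.fst h),
    Set.ncard_setOf_eq_sum_range (fun m hm => lt_of_y_lt_y_add_one hN hm.1)]
  refine Finset.sum_congr rfl fun m _ => ?_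
  rw [colourIndicator, colour_eq_colour_zero, Nat.cast_succ, add_right_comm]
  by_cases h : Y.y m < Y.y (m + 1) <;> simp [h]

theorem cc_eq_sum (hN : ∀ l, N ≤ l → Y.y l = k) (i : ℕ) :
    (cc i Y : ℤ) = colourIndicator n i (Y.y 0) + ∑ m ∈ Finset.range N,
      if Y.y m < Y.y (m + 1) then colourIndicator n i ((m + 1 : ℕ) + Y.y (m + 1)) else 0 := by
  -- column `m` carries a concave corner iff `m = 0 ∨ Y.y (m - 1) < Y.y m` (`m - 1` truncated)
  have hset : {p : ℕ × ℤ | ConcaveAt Y p.1 p.2 ∧ colour n p.1 p.2 = i} =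
      (fun m => (m, Y.y m)) '' {m | (m = 0 ∨ Y.y (m - 1) < Y.y m) ∧ colour n m (Y.y m) = i} := by
    ext ⟨l, z⟩
    simp only [ConcaveAt, Set.mem_ofPred_eq, Set.mem_image, Prod.mk.injEq]
    constructor
    · rintro ⟨⟨rfl, rfl⟩ | ⟨m, rfl, hlt, rfl⟩, hcol⟩
      · exact ⟨0, ⟨Or.inl rfl, hcol⟩, rfl, rfl⟩
      · exact ⟨m + 1, ⟨Or.inr hlt, hcol⟩, rfl, rfl⟩
    · rintro ⟨_ | m, ⟨h, hcol⟩, rfl, rfl⟩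
      · exact ⟨Or.inl ⟨rfl, rfl⟩, hcol⟩
      · exact ⟨Or.inr ⟨m, rfl, by simpa using h, rfl⟩, hcol⟩
  have hbound : ∀ m, (m = 0 ∨ Y.y (m - 1) < Y.y m) ∧ colour n m (Y.y m) = i → m < N + 1 := by
    rintro (_ | m) ⟨h, -⟩
    · omega
    · simpa using lt_of_y_lt_y_add_one hN (h.resolve_left (by omega))
  rw [cc, hset, Set.ncard_image_of_injective _ (fun a b h => congrArg Prod.fst h),
    Set.ncard_setOf_eq_sum_range hbound, Finset.sum_range_succ', add_comm]
  congr 1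
  · simp [colourIndicator]
  · refine Finset.sum_congr rfl fun m _ => ?_
    rw [colourIndicator, colour_eq_colour_zero]
    by_cases h : Y.y m < Y.y (m + 1) <;> simp [h]

theorem boxes_eq_sum (hN : ∀ l, N ≤ l → Y.y l = k) (j : ℕ) :
    (boxes j Y : ℤ) = ∑ m ∈ Finset.range N,
      ∑ s ∈ Finset.Ioc (m + Y.y m) (m + k), colourIndicator n j s := by
  have hset : {p : ℕ × ℤ | Y.y p.1 < p.2 ∧ p.2 ≤ k ∧ colour n p.1 p.2 = j} =
      ↑((Finset.range N ×ˢ Finset.Ioc (Y.y 0) k).filter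
        fun p => p.2 ∈ Finset.Ioc (Y.y p.1) k ∧ colour n p.1 p.2 = j) := by
    ext ⟨m, z⟩
    simp only [Set.mem_ofPred_eq, Finset.coe_filter, Finset.mem_product, Finset.mem_range,
      Finset.mem_Ioc]
    constructor
    · rintro ⟨hlt, hle, hcol⟩
      have hmN : m < N := by
        by_contra! hm
        have := hN m hm
        omega
      exact ⟨⟨hmN, (Y.mono (Nat.zero_le m)).trans_lt hlt, hle⟩, ⟨hlt, hle⟩, hcol⟩
    · rintro ⟨-, hz, hcol⟩
      exact ⟨hz.1, hz.2, hcol⟩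
  rw [boxes, hset, Set.ncard_coe_finset, Finset.card_filter, Nat.cast_sum, Finset.sum_product]
  refine Finset.sum_congr rfl fun m _ => ?_
  have hcols : Finset.Ioc (Y.y 0) k ∩ Finset.Ioc (Y.y m) k = Finset.Ioc (Y.y m) k :=
    Finset.inter_eq_right.mpr (Finset.Ioc_subset_Ioc_left (Y.mono (Nat.zero_le m)))
  calc _ = ∑ z ∈ Finset.Ioc (Y.y 0) k,
        if z ∈ Finset.Ioc (Y.y m) k then colourIndicator n j (m + z) else 0 := by
        refine Finset.sum_congr rfl fun z _ => ?_
        by_cases hz : z ∈ Finset.Ioc (Y.y m) k <;>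
          simp [hz, colourIndicator, colour_eq_colour_zero n m]
    _ = _ := by
        rw [Finset.sum_ite_mem, hcols, ← Finset.map_add_left_Ioc, Finset.sum_map]
        rfl

theorem cc_sub_cx_eq (hN : ∀ l, N ≤ l → Y.y l = k) (i : ℕ) :
    (cc i Y : ℤ) - cx i Y = colourIndicator n i (N + k) + ∑ m ∈ Finset.range N,
      (colourIndicator n i (m + Y.y m) - colourIndicator n i (m + Y.y m + 1)) := by
  set g : ℕ → ℤ := fun m => colourIndicator n i (m + Y.y m)
  -- without a corner on top of column `m`, `Y.y (m + 1) = Y.y m` and the right side vanishes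
  have hcolumn : ∀ m, ((if Y.y m < Y.y (m + 1) then g (m + 1) else 0) -
      if Y.y m < Y.y (m + 1) then colourIndicator n i (m + Y.y m + 1) else 0) =
      (g (m + 1) - g m) + (g m - colourIndicator n i (m + Y.y m + 1)) := by
    intro m
    split_ifs with h
    · ring
    · have : Y.y (m + 1) = Y.y m := le_antisymm (not_lt.mp h) (Y.mono (Nat.le_succ m))
      simp only [g, this]
      push_cast
      ring_nf
  rw [cc_eq_sum hN, cx_eq_sum hN, add_sub_assoc, ← Finset.sum_sub_distrib,
    Finset.sum_congr rfl fun m _ => hcolumn m, Finset.sum_add_distrib, Finset.sum_range_sub]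
  simp only [g, hN N le_rfl, Nat.cast_zero, zero_add]
  ring

theorem sum_cartan_mul_boxes (hN : ∀ l, N ≤ l → Y.y l = k) (hn : 0 < n) {i : ℕ} (hi : i ≤ n) :
    ∑ j ∈ Finset.range (n + 1), cartan n i j * (boxes j Y : ℤ) =
      colourIndicator n i k - colourIndicator n i (N + k) - ∑ m ∈ Finset.range N,
        (colourIndicator n i (m + Y.y m) - colourIndicator n i (m + Y.y m + 1)) := by
  have hcolumn : ∀ m : ℕ, ∑ s ∈ Finset.Ioc (m + Y.y m) (m + k),
      ∑ j ∈ Finset.range (n + 1), cartan n i j * colourIndicator n j s =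
      (colourIndicator n i (m + k) - colourIndicator n i (m + k + 1)) -
        (colourIndicator n i (m + Y.y m) - colourIndicator n i (m + Y.y m + 1)) := by
    intro m
    have := Finset.sum_Ioc_two_nsmul_sub_sub (colourIndicator n i)
      (by linarith [Y.y_le_charge m] : (m : ℤ) + Y.y m ≤ m + k)
    simp only [nsmul_eq_mul, Nat.cast_ofNat] at this
    simp only [sum_cartan_mul_colourIndicator hn hi, this]
  have htop : ∑ m ∈ Finset.range N,
      (colourIndicator n i (m + k) - colourIndicator n i (m + k + 1)) =
      colourIndicator n i k - colourIndicator n i (N + k) := by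
    simpa [add_right_comm] using Finset.sum_range_sub' (fun m : ℕ => colourIndicator n i (m + k)) N
  simp_rw [boxes_eq_sum hN, Finset.mul_sum]
  rw [Finset.sum_comm]
  simp_rw [Finset.sum_comm (s := Finset.range (n + 1)), hcolumn]
  rw [Finset.sum_sub_distrib, htop]

end YD

/-- For every `k ∈ I`, every Young diagram `Y` of charge `k` and every `i ∈ I`,
`cc_i(Y) - cx_i(Y) = δ_{ik} - Σ_{j∈I} a_{ij} b_j(Y)`, i.e. every Young diagram of charge `k`
is a weight vector of weight `Λ_k - Σ_j b_j(Y) α_j`. -/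
theorem fock_weight_vector (n : ℕ) (hn : 2 ≤ n) (k : ℕ) (hk : k ≤ n)
    (Y : YD n k) (i : ℕ) (hi : i ≤ n) :
    (cc i Y : ℤ) - (cx i Y : ℤ)
      = (if i = k then 1 else 0)
        - ∑ j ∈ Finset.range (n + 1), cartan n i j * (boxes j Y : ℤ) := by
  obtain ⟨N, hN⟩ := Y.eventually
  have hcharge : (if i = k then 1 else 0 : ℤ) = colourIndicator n i k := by
    simp [colourIndicator, colour_zero_natCast hk, eq_comm]
  rw [YD.cc_sub_cx_eq hN, YD.sum_cartan_mul_boxes hN (by omega) hi, hcharge]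
  ring

end
end
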